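/- In the Burmester–Desmedt group key protocol with n users arranged in a cycle, where user i holds secret aᵢ and publishes xᵢ = g^{aᵢ} and Xᵢ = (x_{i+1}/x_{i-1})^{aᵢ} (indices mod n), user i can compute g^{a₁a₂ + a₂a₃ + ... + aₙa₁} as (x_{i-1})^{n·aᵢ} · Xᵢ^{n-1} · X_{i+1}^{n-2} · ... · X_{i+n-2}, and this value equals g^{Σⱼ aⱼa_{j+1}} independently of i. -/
import Mathlib

lemma bd_telescope {R : Type*} [CommRing R] (V : ℕ → R) (m : ℕ) :
    ∑ k ∈ Finset.range m, ((m - k : ℕ) : R) * (V (k + 1) - V k)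
      = ∑ k ∈ Finset.range m, V (k + 1) - (m : R) * V 0 := by
  induction m with
  | zero => simp
  | succ m ih =>
    have h1 : ∀ k ∈ Finset.range (m + 1),
        ((m + 1 - k : ℕ) : R) * (V (k + 1) - V k)
          = ((m - k : ℕ) : R) * (V (k + 1) - V k) + (V (k + 1) - V k) := by
      intro k hk
      rw [Finset.mem_range] at hk
      have h : m + 1 - k = (m - k) + 1 := by omega
      rw [h]; push_cast; ring
    rw [Finset.sum_congr rfl h1, Finset.sum_add_distrib, Finset.sum_range_succ _ m,
        Nat.sub_self, Finset.sum_range_sub, ih, Finset.sum_range_succ _ m]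
    push_cast; ring

lemma bd_sum_zmod {n : ℕ} [NeZero n] {M : Type*} [AddCommMonoid M] (f : ZMod n → M) :
    ∑ k ∈ Finset.range n, f (k : ZMod n) = ∑ j : ZMod n, f j := by
  refine Finset.sum_nbij' (fun k => (k : ZMod n)) (fun j => j.val) ?_ ?_ ?_ ?_ ?_ <;>
    intro a ha
  · exact Finset.mem_univ _
  · exact Finset.mem_range.2 (ZMod.val_lt a)
  · exact ZMod.val_cast_of_lt (Finset.mem_range.1 ha)
  · exact ZMod.natCast_rightInverse a
  · rfl

/-- Burmester–Desmedt group key: each user `i` computes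
`(x_{i-1})^{n·aᵢ} · Xᵢ^{n-1} · X_{i+1}^{n-2} ⋯ X_{i+n-2}` and obtains
`g^{Σⱼ aⱼ a_{j+1}}`, independently of `i`. -/
theorem stmt1 (q n : ℕ) (hq : q.Prime) [NeZero n] (G : Type) [CommGroup G]
    (g : G) (hg : orderOf g = q) (a : ZMod n → ZMod q)
    (x : ZMod n → G) (hx : ∀ i, x i = g ^ (a i).val)
    (X : ZMod n → G) (hX : ∀ i, X i = g ^ (a i * (a (i + 1) - a (i - 1))).val) :
    ∀ i : ZMod n,
      x (i - 1) ^ (n * (a i).val) *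
        ∏ k ∈ Finset.range (n - 1), X (i + (k : ZMod n)) ^ (n - 1 - k) =
      g ^ (∑ j : ZMod n, a j * a (j + 1)).val := by
  intro i
  haveI : NeZero q := ⟨hq.pos.ne'⟩
  have key : ∀ m : ℕ, g ^ ((m : ZMod q)).val = g ^ m := by
    intro m
    rw [ZMod.val_natCast, ← hg, pow_mod_orderOf]
  -- rewrite LHS as a single power of g
  have hL : x (i - 1) ^ (n * (a i).val) *
        ∏ k ∈ Finset.range (n - 1), X (i + (k : ZMod n)) ^ (n - 1 - k)
      = g ^ ((a (i - 1)).val * (n * (a i).val) +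
          ∑ k ∈ Finset.range (n - 1),
            (a (i + (k : ZMod n)) * (a (i + (k : ZMod n) + 1) -
              a (i + (k : ZMod n) - 1))).val * (n - 1 - k)) := by
    rw [hx, ← pow_mul, pow_add]
    congr 1
    rw [← Finset.prod_pow_eq_pow_sum]
    refine Finset.prod_congr rfl fun k hk => ?_
    rw [hX, ← pow_mul]
  rw [hL, ← key]
  congr 1
  have hval : ∀ c : ZMod q, ((c.val : ℕ) : ZMod q) = c := fun c => ZMod.natCast_rightInverse c
  push_cast [hval]
  -- now an identity in ZMod q
  set V : ℕ → ZMod q := fun k => a (i + (k : ZMod n) - 1) * a (i + (k : ZMod n)) with hV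
  have hA : ∀ k ∈ Finset.range (n - 1),
      a (i + (k : ZMod n)) * (a (i + (k : ZMod n) + 1) - a (i + (k : ZMod n) - 1))
          * ((n - 1 - k : ℕ) : ZMod q)
        = (((n - 1) - k : ℕ) : ZMod q) * (V (k + 1) - V k) := by
    intro k hk
    have h1 : ((k + 1 : ℕ) : ZMod n) = (k : ZMod n) + 1 := by push_cast; ring
    simp only [hV, h1, add_sub_cancel_right]
    ring
  rw [Finset.sum_congr rfl hA, bd_telescope]
  have hn1 : ((n - 1 : ℕ) : ZMod q) = (n : ZMod q) - 1 := by
    rw [Nat.cast_sub (NeZero.one_le), Nat.cast_one]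
  have hV0 : V 0 = a (i - 1) * a i := by simp [hV]
  have hsum : ∑ k ∈ Finset.range (n - 1), V (k + 1) + V 0 = ∑ k ∈ Finset.range n, V k := by
    have h : (n - 1) + 1 = n := Nat.succ_pred_eq_of_pos (NeZero.pos n)
    rw [← Finset.sum_range_succ' V (n - 1), h]
  have hfull : ∑ k ∈ Finset.range n, V k = ∑ j : ZMod n, a j * a (j + 1) := by
    rw [hV, bd_sum_zmod (fun j => a (i + j - 1) * a (i + j))]
    rw [← Equiv.sum_comp (Equiv.addLeft (i - 1)) (fun j => a j * a (j + 1))]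
    refine Finset.sum_congr rfl fun j _ => ?_
    simp only [Equiv.coe_addLeft]
    have h1 : i + j - 1 = i - 1 + j := by ring
    have h2 : i + j = i - 1 + j + 1 := by ring
    rw [h1, h2]
  rw [← hfull, ← hsum, hn1, hV0]
  congr 1
  ring
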